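/- arXiv:1709.07209 — 6 statements merged into one kernel-verified Lean document; each statement's English description precedes it below -/
import Mathlib

section
/- Let δ be a submodular function on the finite subsets of a set M (i.e., δ(X ∪ Y) + δ(X ∩ Y) ≤ δ(X) + δ(Y)), and define δ(X/B) = δ(X ∪ B) - δ(B) for finite B ⊆ M. Write B ≤ A (B is strong in A) if B ⊆ A and δ(X/B) ≥ 0 for every finite X with B ⊆ X ⊆ A. Then the relation ≤ is transitive: if A ≤ B and B ≤ C then A ≤ C. -/
/-!
For `A ⊆ X ⊆ C`, strength of `A` in `B` gives `δ A ≤ δ (X ∩ B)` and strength of `B` in `C`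
gives `δ B ≤ δ (X ∪ B)`; adding these and applying submodularity to `X` and `B` yields
`δ A ≤ δ X`.
-/

namespace Predimension

variable {M : Type*} [DecidableEq M] {δ : Finset M → ℤ} {A B C : Finset M}

/-- The relation `A ≤ B`; for `A ⊆ X` the condition `δ(X/A) ≥ 0` reads `δ A ≤ δ X`. -/
def IsStrong (δ : Finset M → ℤ) (A B : Finset M) : Prop :=
  A ⊆ B ∧ ∀ X : Finset M, A ⊆ X → X ⊆ B → δ A ≤ δ X

theorem isStrong_iff_relPredim_nonneg :
    IsStrong δ A B ↔ A ⊆ B ∧ ∀ X : Finset M, A ⊆ X → X ⊆ B → 0 ≤ δ (X ∪ A) - δ A := by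
  refine and_congr_right fun _ => forall_congr' fun X => imp_congr_right fun hAX => ?_
  rw [Finset.union_eq_left.mpr hAX, sub_nonneg]

theorem IsStrong.trans (hsub : ∀ X Y : Finset M, δ (X ∪ Y) + δ (X ∩ Y) ≤ δ X + δ Y)
    (hAB : IsStrong δ A B) (hBC : IsStrong δ B C) : IsStrong δ A C := by
  refine ⟨hAB.1.trans hBC.1, fun X hAX hXC => ?_⟩
  have hA : δ A ≤ δ (X ∩ B) :=
    hAB.2 _ (Finset.subset_inter hAX hAB.1) Finset.inter_subset_right
  have hB : δ B ≤ δ (X ∪ B) :=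
    hBC.2 _ Finset.subset_union_right (Finset.union_subset hXC hBC.1)
  linarith [hsub X B]

end Predimension

/-- For a submodular predimension `δ` on finite subsets of `M`, the strong-substructure
relation `B ≤ A` (i.e. `B ⊆ A` and `δ(X/B) ≥ 0` for all finite `B ⊆ X ⊆ A`) is transitive. -/
theorem stmt_2 {M : Type*} [DecidableEq M] (δ : Finset M → ℤ)
    (hsub : ∀ X Y : Finset M, δ (X ∪ Y) + δ (X ∩ Y) ≤ δ X + δ Y)
    (strong : Finset M → Finset M → Prop)
    (hstrong : ∀ A B : Finset M,
      strong A B ↔ A ⊆ B ∧ ∀ X : Finset M, A ⊆ X → X ⊆ B → 0 ≤ δ (X ∪ A) - δ A)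
    (A B C : Finset M) (hAB : strong A B) (hBC : strong B C) :
    strong A C := by
  have hstrong' : ∀ A B, strong A B ↔ Predimension.IsStrong δ A B := fun A B =>
    (hstrong A B).trans Predimension.isStrong_iff_relPredim_nonneg.symm
  rw [hstrong'] at hAB hBC ⊢
  exact hAB.trans hsub hBC
end

section
/- Let A be a finite L_n-structure with an n-ary relation R, and δ(A) = |A| - |R^A|. Suppose every subset B ⊆ A satisfies δ(B) ≥ 0. Define a clique reduct A_c: its maximal cliques are the maximal sets K ⊆ A^r of size ≥ s = n - r + 1 such that for some (s-1)-tuple ȳ of elements of A, R^A restricted appropriately consists exactly of the tuples (ȳ, x̄) for x̄ ∈ K. Then λ(B_c) ≥ 0 for every subset B ⊆ A, where λ(B_c) = |B| - Σ_{K ∈ maxcliques(B_c)} max(0, |K| - (s-1)). -/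
/-!
Choose for every maximal clique `K` of `B_c` an `(s-1)`-tuple `ȳ_K` with
`K = {x̄ ∈ B^r : (ȳ_K, x̄) ∈ R}`; distinct cliques get distinct tuples. Adjoining the entries of
all `ȳ_K` to `B` gives `B̄` with `|B̄| ≤ |B| + (s-1)·#cliques`, while the pairs `(ȳ_K, x̄)`,
`x̄ ∈ K`, are distinct relations of `B̄`, so `|R^B̄| ≥ Σ_K |K|`. Hence
`0 ≤ δ(B̄) ≤ |B| + (s-1)·#cliques - Σ_K |K| = λ(B_c)`, using `|K| ≥ s > s - 1`.
-/

open Finset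

section Fibers

variable {β γ : Type*} [DecidableEq β] [DecidableEq γ]

theorem exists_witnesses_sum_card_eq (R : Finset (β × γ)) (X : Finset γ)
    (𝒦 : Finset (Finset γ))
    (h𝒦 : ∀ K ∈ 𝒦, K.Nonempty ∧ ∃ b, K = X.filter fun x => (b, x) ∈ R) :
    ∃ Y ⊆ R.image Prod.fst, #Y = #𝒦 ∧ ∑ K ∈ 𝒦, #K = #((Y ×ˢ X).filter (· ∈ R)) := by
  rcases 𝒦.eq_empty_or_nonempty with rfl | ⟨K₀, hK₀⟩
  · exact ⟨∅, by simp⟩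
  have : Nonempty β := ⟨(h𝒦 K₀ hK₀).2.choose⟩
  choose! b hb using fun K hK => (h𝒦 K hK).2
  have hinj : Set.InjOn b 𝒦 := fun K hK K' hK' h => by rw [hb K hK, hb K' hK', h]
  refine ⟨𝒦.image b, ?_, card_image_of_injOn hinj, ?_⟩
  · simp only [subset_iff, mem_image, forall_exists_index, and_imp, forall_apply_eq_imp_iff₂]
    intro K hK
    obtain ⟨x, hx⟩ := (h𝒦 K hK).1
    rw [hb K hK, mem_filter] at hx
    exact ⟨(b K, x), hx.2, rfl⟩
  · rw [card_filter, sum_product, sum_image hinj]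
    refine sum_congr rfl fun K hK => ?_
    rw [← card_filter, ← hb K hK]

end Fibers

section AdjoinEntries

variable {α : Type*} [DecidableEq α] {m : ℕ}

/-- The set `B̄` of the paper, when `Y` consists of the tuples `ȳ_K`. -/
def adjoinEntries (B : Finset α) (Y : Finset (Fin m → α)) : Finset α :=
  B ∪ Y.biUnion fun y => univ.image y

theorem subset_adjoinEntries (B : Finset α) (Y : Finset (Fin m → α)) :
    B ⊆ adjoinEntries B Y :=
  subset_union_left

theorem apply_mem_adjoinEntries (B : Finset α) {Y : Finset (Fin m → α)} {y : Fin m → α}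
    (hy : y ∈ Y) (i : Fin m) : y i ∈ adjoinEntries B Y :=
  mem_union_right _ (mem_biUnion.2 ⟨y, hy, mem_image_of_mem _ (mem_univ i)⟩)

theorem card_adjoinEntries_le (B : Finset α) (Y : Finset (Fin m → α)) :
    #(adjoinEntries B Y) ≤ #B + #Y * m :=
  (card_union_le _ _).trans <| Nat.add_le_add_left
    (card_biUnion_le_card_mul _ _ _ fun _ _ => card_image_le.trans (by simp)) _

theorem adjoinEntries_subset {A B : Finset α} {Y : Finset (Fin m → α)} (hB : B ⊆ A)
    (hY : ∀ y ∈ Y, ∀ i, y i ∈ A) : adjoinEntries B Y ⊆ A := by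
  refine union_subset hB fun a ha => ?_
  obtain ⟨y, hy, ha⟩ := mem_biUnion.1 ha
  obtain ⟨i, -, rfl⟩ := mem_image.1 ha
  exact hY y hy i

end AdjoinEntries

theorem sum_max_zero_sub_eq {ι : Type*} (t : Finset ι) (f : ι → ℤ) {c : ℤ}
    (h : ∀ i ∈ t, c ≤ f i) : ∑ i ∈ t, max 0 (f i - c) = ∑ i ∈ t, f i - #t * c := by
  rw [sum_congr rfl fun i hi => max_eq_right (sub_nonneg.2 (h i hi)), sum_sub_distrib,
    sum_const, nsmul_eq_mul]

theorem stmt_6_general {α : Type*} [DecidableEq α] (n r s : ℕ)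
    (hs : s = n - r + 1)
    (R : Finset ((Fin (s - 1) → α) × (Fin r → α)))
    (A : Finset α)
    (hRA : ∀ p ∈ R, (∀ i, p.1 i ∈ A) ∧ (∀ i, p.2 i ∈ A))
    (hδ : ∀ B ⊆ A, 0 ≤ (B.card : ℤ) -
      ((R.filter fun p => (∀ i, p.1 i ∈ B) ∧ (∀ i, p.2 i ∈ B)).card : ℤ))
    (cliquePred : Finset α → Finset (Fin r → α) → Prop)
    (hcp : ∀ (B : Finset α) (K : Finset (Fin r → α)),
      cliquePred B K ↔ s ≤ K.card ∧ ∃ y : Fin (s - 1) → α,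
        K = (Fintype.piFinset fun _ : Fin r => B).filter fun x => (y, x) ∈ R)
    (maxcl : Finset α → Finset (Finset (Fin r → α)))
    (hmax : ∀ (B : Finset α) (K : Finset (Fin r → α)),
      K ∈ maxcl B ↔ cliquePred B K ∧ ∀ K', cliquePred B K' → K ⊆ K' → K' = K) :
    ∀ B ⊆ A, 0 ≤ (B.card : ℤ) -
      ∑ K ∈ maxcl B, max 0 ((K.card : ℤ) - ((s : ℤ) - 1)) := by
  intro B hB
  have hclique K (hK : K ∈ maxcl B) := (hcp B K).1 ((hmax B K).1 hK).1
  obtain ⟨Y, hYR, hYcard, hsum⟩ := exists_witnesses_sum_card_eq R _ (maxcl B) fun K hK =>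
    ⟨card_pos.1 (by have := (hclique K hK).1; omega), (hclique K hK).2⟩
  set B' := adjoinEntries B Y
  have hB'A : B' ⊆ A := adjoinEntries_subset hB fun y hy i => by
    obtain ⟨p, hp, rfl⟩ := mem_image.1 (hYR hy)
    exact (hRA p hp).1 i
  have hB'card : (#B' : ℤ) ≤ #B + #(maxcl B) * ((s : ℤ) - 1) := by
    have := card_adjoinEntries_le B Y
    zify [show 1 ≤ s by omega] at this
    rwa [← hYcard]
  have hR : ∑ K ∈ maxcl B, (#K : ℤ) ≤
      #(R.filter fun p => (∀ i, p.1 i ∈ B') ∧ ∀ i, p.2 i ∈ B') := by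
    rw [← Nat.cast_sum, hsum, Nat.cast_le]
    refine card_le_card fun p hp => ?_
    simp only [mem_filter, mem_product, Fintype.mem_piFinset] at hp ⊢
    exact ⟨hp.2, apply_mem_adjoinEntries B hp.1.1, fun i => subset_adjoinEntries B Y (hp.1.2 i)⟩
  rw [sum_max_zero_sub_eq _ _ fun K hK => by have := (hclique K hK).1; omega]
  linarith [hδ B' hB'A]

/-- If `A` is a finite structure with an `n`-ary relation `R` (viewed as a set of pairs
consisting of an `(s-1)`-tuple and an `r`-tuple, `n = (s-1) + r`) such that
`δ(B) = |B| - |R^B| ≥ 0` for every `B ⊆ A`, then the clique reduct has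
`λ(B_c) = |B| - Σ_{K ∈ maxcliques(B_c)} max 0 (|K| - (s-1)) ≥ 0` for every `B ⊆ A`,
where the maximal cliques of `B_c` are the maximal sets `K ⊆ B^r` of size `≥ s` of the
form `K = {x̄ ∈ B^r : (ȳ, x̄) ∈ R}` for some `(s-1)`-tuple `ȳ`. -/
theorem stmt_6 {α : Type*} [DecidableEq α] (n r s : ℕ)
    (hn : 2 ≤ n) (hr : 0 < r) (hrn : r < n) (hs : s = n - r + 1)
    (R : Finset ((Fin (s - 1) → α) × (Fin r → α)))
    (A : Finset α)
    (hRA : ∀ p ∈ R, (∀ i, p.1 i ∈ A) ∧ (∀ i, p.2 i ∈ A))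
    (hδ : ∀ B ⊆ A, 0 ≤ (B.card : ℤ) -
      ((R.filter fun p => (∀ i, p.1 i ∈ B) ∧ (∀ i, p.2 i ∈ B)).card : ℤ))
    (cliquePred : Finset α → Finset (Fin r → α) → Prop)
    (hcp : ∀ (B : Finset α) (K : Finset (Fin r → α)),
      cliquePred B K ↔ s ≤ K.card ∧ ∃ y : Fin (s - 1) → α,
        K = (Fintype.piFinset fun _ : Fin r => B).filter fun x => (y, x) ∈ R)
    (maxcl : Finset α → Finset (Finset (Fin r → α)))
    (hmax : ∀ (B : Finset α) (K : Finset (Fin r → α)),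
      K ∈ maxcl B ↔ cliquePred B K ∧ ∀ K', cliquePred B K' → K ⊆ K' → K' = K) :
    ∀ B ⊆ A, 0 ≤ (B.card : ℤ) -
      ∑ K ∈ maxcl B, max 0 ((K.card : ℤ) - ((s : ℤ) - 1)) :=
  stmt_6_general n r s hs R A hRA hδ cliquePred hcp maxcl hmax
end

section
/- In the class C₀ of finite clique structures (maximal cliques pairwise intersecting in fewer than s points), the standard amalgam D of A₁ and A₂ over a common induced substructure B = A₁ ∩ A₂ satisfies λ(D/A₁) = λ(A₂/B), where λ(X/Y) = λ(X ∪ Y) - λ(Y). -/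
/-!
Call a clique of `Aᵢ` *big* if its trace on `B` has at least `s` points. Since `B` is a common
induced substructure and distinct maximal cliques meet in fewer than `s` points, a big clique is
determined by its trace, and the big cliques of `A₁` and of `A₂` are paired off by equality of
traces; the pairs are exactly the `(K₁, K₂)` glued in `D`, and then `K₁ ∩ K₂` is the common trace,
a clique of `B`. Hence, with `w K = max 0 (|K| - (s - 1))`, each glued clique `K₁ ∪ K₂` has weight
`w K₁ + w K₂ - w (K₁ ∩ K₂)`, while the other cliques of `A₁` and `A₂` pass unchanged into `D` (one
lying in both is inside `B`, so has fewer than `s` points and weight `0`). Summing, the weights of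
`D` are those of `A₁` and `A₂` minus those of `B`, and inclusion–exclusion on the universes gives
the identity.
-/

section CliqueAmalgam

open Finset

variable {β : Type*} {s : ℕ} {T : Finset β} {M M₁ M₂ : Finset (Finset β)} {K L : Finset β}

def cliqueWeight (s : ℕ) (K : Finset β) : ℤ := max 0 ((#K : ℤ) - ((s : ℤ) - 1))

theorem cliqueWeight_eq_zero (h : #K < s) : cliqueWeight s K = 0 := by
  unfold cliqueWeight
  omega

variable [DecidableEq β]

def induced (s : ℕ) (M : Finset (Finset β)) (T : Finset β) : Finset (Finset β) :=
  (M.image (· ∩ T)).filter (s ≤ #·)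

def gluingPairs (s : ℕ) (M₁ M₂ : Finset (Finset β)) : Finset (Finset β × Finset β) :=
  (M₁ ×ˢ M₂).filter fun p => s ≤ #(p.1 ∩ p.2)

def amalgam (s : ℕ) (T : Finset β) (M₁ M₂ : Finset (Finset β)) : Finset (Finset β) :=
  (M₁ ∪ M₂).filter (fun K => #(K ∩ T) < s) ∪ (gluingPairs s M₁ M₂).image fun p => p.1 ∪ p.2

theorem cliqueWeight_union_add_inter (h : s ≤ #(K ∩ L)) :
    cliqueWeight s (K ∪ L) + cliqueWeight s (K ∩ L) = cliqueWeight s K + cliqueWeight s L := by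
  have hK := card_le_card (inter_subset_left : K ∩ L ⊆ K)
  have hL := card_le_card (inter_subset_right : K ∩ L ⊆ L)
  have hKL := card_le_card (inter_subset_left.trans subset_union_left : K ∩ L ⊆ K ∪ L)
  have := card_union_add_card_inter K L
  unfold cliqueWeight
  omega

theorem mem_induced : L ∈ induced s M T ↔ (∃ K ∈ M, K ∩ T = L) ∧ s ≤ #L := by
  simp [induced]

theorem exists_inter_eq_of_induced_eq (hMT : induced s M₁ T = induced s M₂ T) (hK : K ∈ M₁)
    (h : s ≤ #(K ∩ T)) : ∃ K' ∈ M₂, K' ∩ T = K ∩ T :=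
  (mem_induced.1 (hMT ▸ mem_induced.2 ⟨⟨K, hK, rfl⟩, h⟩)).1

theorem eq_of_le_card_inter (hM : (M : Set (Finset β)).Pairwise fun K L => #(K ∩ L) < s)
    (hK : K ∈ M) (hL : L ∈ M) (h : s ≤ #(K ∩ L)) : K = L := by
  by_contra hne
  have := hM hK hL hne
  omega

theorem eq_of_inter_eq (hM : (M : Set (Finset β)).Pairwise fun K L => #(K ∩ L) < s)
    (hK : K ∈ M) (hL : L ∈ M) (hKL : K ∩ T = L ∩ T) (h : s ≤ #(K ∩ T)) : K = L :=
  eq_of_le_card_inter hM hK hL <| h.trans <| card_le_card <|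
    subset_inter inter_subset_left (hKL.le.trans inter_subset_left)

theorem inter_eq_inter_of_inter_eq (hT : K ∩ L ⊆ T) (hKL : K ∩ T = L ∩ T) :
    K ∩ L = K ∩ T :=
  (subset_inter inter_subset_left hT).antisymm
    (subset_inter inter_subset_left (hKL.le.trans inter_subset_left))

theorem inter_eq_inter_of_le_card_inter (hT : ∀ K₁ ∈ M₁, ∀ K₂ ∈ M₂, K₁ ∩ K₂ ⊆ T)
    (hM₁ : (M₁ : Set (Finset β)).Pairwise fun K L => #(K ∩ L) < s)
    (hMT : induced s M₁ T = induced s M₂ T) (hK : K ∈ M₁) (hL : L ∈ M₂) (h : s ≤ #(K ∩ L)) :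
    K ∩ T = L ∩ T := by
  have hsub : K ∩ L ⊆ L ∩ T := subset_inter inter_subset_right (hT K hK L hL)
  obtain ⟨K', hK', hK'T⟩ :=
    exists_inter_eq_of_induced_eq hMT.symm hL (h.trans (card_le_card hsub))
  have hKK' : K = K' := eq_of_le_card_inter hM₁ hK hK' <| h.trans <| card_le_card <|
    subset_inter inter_subset_left (hsub.trans (hK'T.ge.trans inter_subset_left))
  rw [hKK', hK'T]

theorem mem_gluingPairs (hT : ∀ K₁ ∈ M₁, ∀ K₂ ∈ M₂, K₁ ∩ K₂ ⊆ T)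
    (hM₁ : (M₁ : Set (Finset β)).Pairwise fun K L => #(K ∩ L) < s)
    (hMT : induced s M₁ T = induced s M₂ T) {p : Finset β × Finset β} :
    p ∈ gluingPairs s M₁ M₂ ↔ p.1 ∈ M₁ ∧ p.2 ∈ M₂ ∧ p.1 ∩ T = p.2 ∩ T ∧ s ≤ #(p.1 ∩ T) := by
  simp only [gluingPairs, mem_filter, mem_product, and_assoc]
  refine and_congr_right fun h₁ => and_congr_right fun h₂ => ⟨fun h => ?_, fun ⟨hpT, h⟩ => ?_⟩
  · have hpT := inter_eq_inter_of_le_card_inter hT hM₁ hMT h₁ h₂ h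
    exact ⟨hpT, inter_eq_inter_of_inter_eq (hT _ h₁ _ h₂) hpT ▸ h⟩
  · rwa [inter_eq_inter_of_inter_eq (hT _ h₁ _ h₂) hpT]

theorem union_inter_eq_left_inter (h : K ∩ T = L ∩ T) : (K ∪ L) ∩ T = K ∩ T := by
  rw [union_inter_distrib_right, ← h, union_self]

theorem injOn_union_gluingPairs (hT : ∀ K₁ ∈ M₁, ∀ K₂ ∈ M₂, K₁ ∩ K₂ ⊆ T)
    (hM₁ : (M₁ : Set (Finset β)).Pairwise fun K L => #(K ∩ L) < s)
    (hM₂ : (M₂ : Set (Finset β)).Pairwise fun K L => #(K ∩ L) < s)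
    (hMT : induced s M₁ T = induced s M₂ T) :
    Set.InjOn (fun p => p.1 ∪ p.2) (gluingPairs s M₁ M₂ : Set (Finset β × Finset β)) := by
  intro p hp q hq hpq
  obtain ⟨hp₁, hp₂, hpT, hp⟩ := (mem_gluingPairs hT hM₁ hMT).1 hp
  obtain ⟨hq₁, hq₂, hqT, -⟩ := (mem_gluingPairs hT hM₁ hMT).1 hq
  have h₁ : p.1 ∩ T = q.1 ∩ T := by
    rw [← union_inter_eq_left_inter hpT, ← union_inter_eq_left_inter hqT]
    exact congrArg (· ∩ T) hpq
  exact Prod.ext (eq_of_inter_eq hM₁ hp₁ hq₁ h₁ hp)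
    (eq_of_inter_eq hM₂ hp₂ hq₂ (hpT ▸ hqT ▸ h₁) (hpT ▸ hp))

theorem sum_gluingPairs_fst {γ : Type*} [AddCommMonoid γ]
    (hT : ∀ K₁ ∈ M₁, ∀ K₂ ∈ M₂, K₁ ∩ K₂ ⊆ T)
    (hM₁ : (M₁ : Set (Finset β)).Pairwise fun K L => #(K ∩ L) < s)
    (hM₂ : (M₂ : Set (Finset β)).Pairwise fun K L => #(K ∩ L) < s)
    (hMT : induced s M₁ T = induced s M₂ T) (f : Finset β → γ) :
    ∑ p ∈ gluingPairs s M₁ M₂, f p.1 = ∑ K ∈ M₁.filter (fun K => s ≤ #(K ∩ T)), f K := by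
  refine sum_nbij Prod.fst ?_ ?_ ?_ fun _ _ => rfl
  · intro p hp
    obtain ⟨h₁, -, -, h⟩ := (mem_gluingPairs hT hM₁ hMT).1 hp
    exact mem_filter.2 ⟨h₁, h⟩
  · intro p hp q hq hpq
    obtain ⟨-, hp₂, hpT, hp⟩ := (mem_gluingPairs hT hM₁ hMT).1 hp
    obtain ⟨-, hq₂, hqT, -⟩ := (mem_gluingPairs hT hM₁ hMT).1 hq
    have hpq : p.1 = q.1 := hpq
    refine Prod.ext hpq (eq_of_inter_eq hM₂ hp₂ hq₂ ?_ (hpT ▸ hp))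
    rw [← hpT, ← hqT, hpq]
  · intro K hK
    obtain ⟨h₁, h⟩ := mem_filter.1 hK
    obtain ⟨K₂, h₂, hK₂⟩ := exists_inter_eq_of_induced_eq hMT h₁ h
    exact ⟨(K, K₂), (mem_gluingPairs hT hM₁ hMT).2 ⟨h₁, h₂, hK₂.symm, h⟩, rfl⟩

theorem sum_gluingPairs_swap {γ : Type*} [AddCommMonoid γ] (f : Finset β × Finset β → γ) :
    ∑ p ∈ gluingPairs s M₂ M₁, f p = ∑ p ∈ gluingPairs s M₁ M₂, f p.swap := by
  refine sum_nbij' Prod.swap Prod.swap ?_ ?_ (fun _ _ => rfl) (fun _ _ => rfl) (fun _ _ => rfl) <;>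
    simp [gluingPairs, inter_comm, and_comm]

theorem sum_induced {γ : Type*} [AddCommMonoid γ]
    (hM : (M : Set (Finset β)).Pairwise fun K L => #(K ∩ L) < s) (f : Finset β → γ) :
    ∑ L ∈ induced s M T, f L = ∑ K ∈ M.filter (fun K => s ≤ #(K ∩ T)), f (K ∩ T) := by
  rw [induced, filter_image]
  exact sum_image fun K hK L hL h => eq_of_inter_eq hM (mem_filter.1 hK).1 (mem_filter.1 hL).1 h
    (mem_filter.1 hK).2

theorem sum_gluingPairs_snd {γ : Type*} [AddCommMonoid γ]
    (hT : ∀ K₁ ∈ M₁, ∀ K₂ ∈ M₂, K₁ ∩ K₂ ⊆ T)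
    (hM₁ : (M₁ : Set (Finset β)).Pairwise fun K L => #(K ∩ L) < s)
    (hM₂ : (M₂ : Set (Finset β)).Pairwise fun K L => #(K ∩ L) < s)
    (hMT : induced s M₁ T = induced s M₂ T) (f : Finset β → γ) :
    ∑ p ∈ gluingPairs s M₁ M₂, f p.2 = ∑ K ∈ M₂.filter (fun K => s ≤ #(K ∩ T)), f K := by
  rw [← sum_gluingPairs_fst (fun K₂ h₂ K₁ h₁ => inter_comm K₁ K₂ ▸ hT K₁ h₁ K₂ h₂) hM₂ hM₁
    hMT.symm, sum_gluingPairs_swap fun p => f p.1]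
  rfl

theorem sum_gluingPairs_inter {γ : Type*} [AddCommMonoid γ]
    (hT : ∀ K₁ ∈ M₁, ∀ K₂ ∈ M₂, K₁ ∩ K₂ ⊆ T)
    (hM₁ : (M₁ : Set (Finset β)).Pairwise fun K L => #(K ∩ L) < s)
    (hM₂ : (M₂ : Set (Finset β)).Pairwise fun K L => #(K ∩ L) < s)
    (hMT : induced s M₁ T = induced s M₂ T) (f : Finset β → γ) :
    ∑ p ∈ gluingPairs s M₁ M₂, f (p.1 ∩ p.2) = ∑ L ∈ induced s M₂ T, f L := by
  rw [← hMT, sum_induced hM₁, ← sum_gluingPairs_fst hT hM₁ hM₂ hMT]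
  refine sum_congr rfl fun p hp => ?_
  obtain ⟨hp₁, hp₂, hpT, -⟩ := (mem_gluingPairs hT hM₁ hMT).1 hp
  rw [inter_eq_inter_of_inter_eq (hT _ hp₁ _ hp₂) hpT]

theorem sum_cliqueWeight_amalgam_add_sum_induced (hT : ∀ K₁ ∈ M₁, ∀ K₂ ∈ M₂, K₁ ∩ K₂ ⊆ T)
    (hM₁ : (M₁ : Set (Finset β)).Pairwise fun K L => #(K ∩ L) < s)
    (hM₂ : (M₂ : Set (Finset β)).Pairwise fun K L => #(K ∩ L) < s)
    (hMT : induced s M₁ T = induced s M₂ T) :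
    ∑ K ∈ amalgam s T M₁ M₂, cliqueWeight s K + ∑ L ∈ induced s M₂ T, cliqueWeight s L =
      ∑ K ∈ M₁, cliqueWeight s K + ∑ K ∈ M₂, cliqueWeight s K := by
  set P := gluingPairs s M₁ M₂
  set small := fun M : Finset (Finset β) => M.filter fun K => #(K ∩ T) < s
  have hdisj : Disjoint (small (M₁ ∪ M₂)) (P.image fun p => p.1 ∪ p.2) := by
    refine disjoint_left.2 fun K hK hK' => ?_
    obtain ⟨p, hp, rfl⟩ := mem_image.1 hK'
    obtain ⟨hp₁₂, hp⟩ := mem_filter.1 hp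
    obtain ⟨hp₁, hp₂⟩ := mem_product.1 hp₁₂
    have : p.1 ∩ p.2 ⊆ (p.1 ∪ p.2) ∩ T :=
      subset_inter (inter_subset_left.trans subset_union_left) (hT _ hp₁ _ hp₂)
    exact (mem_filter.1 hK).2.not_ge (hp.trans (card_le_card this))
  have hsmall : ∑ K ∈ small M₁ ∩ small M₂, cliqueWeight s K = 0 := by
    refine sum_eq_zero fun K hK => cliqueWeight_eq_zero ?_
    simp only [small, mem_inter, mem_filter] at hK
    obtain ⟨⟨hK₁, hK⟩, hK₂, -⟩ := hK
    rwa [inter_eq_left.2 (inter_self K ▸ hT K hK₁ K hK₂)] at hK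
  have hglue : ∑ p ∈ P, (cliqueWeight s (p.1 ∪ p.2) + cliqueWeight s (p.1 ∩ p.2)) =
      ∑ p ∈ P, (cliqueWeight s p.1 + cliqueWeight s p.2) :=
    sum_congr rfl fun p hp => cliqueWeight_union_add_inter (mem_filter.1 hp).2
  have hfst := sum_gluingPairs_fst hT hM₁ hM₂ hMT (cliqueWeight s)
  have hsnd := sum_gluingPairs_snd hT hM₁ hM₂ hMT (cliqueWeight s)
  have hinter := sum_gluingPairs_inter hT hM₁ hM₂ hMT (cliqueWeight s)
  have hunion := sum_union_inter (s₁ := small M₁) (s₂ := small M₂) (f := cliqueWeight s)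
  have h₁ := sum_filter_add_sum_filter_not M₁ (fun K => #(K ∩ T) < s) (cliqueWeight s)
  have h₂ := sum_filter_add_sum_filter_not M₂ (fun K => #(K ∩ T) < s) (cliqueWeight s)
  simp only [not_lt] at h₁ h₂
  rw [amalgam, sum_union hdisj, sum_image (injOn_union_gluingPairs hT hM₁ hM₂ hMT)]
  rw [sum_add_distrib, sum_add_distrib] at hglue
  simp only [small, filter_union] at hunion hsmall ⊢
  linarith

end CliqueAmalgam

theorem Finset.filter_forall_mem_eq_inter_piFinset {ι α : Type*} [Fintype ι] [DecidableEq ι]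
    [DecidableEq α] (K : Finset (ι → α)) (X : Finset α)
    [DecidablePred fun x : ι → α => ∀ i, x i ∈ X] :
    K.filter (fun x => ∀ i, x i ∈ X) = K ∩ Fintype.piFinset fun _ => X := by
  ext
  simp

theorem stmt_9_general {α : Type*} [DecidableEq α] (r s : ℕ)
    (A₁ A₂ : Finset α) (M₁ M₂ : Finset (Finset (Fin r → α)))
    (h₁sub : ∀ K ∈ M₁, ∀ x ∈ K, ∀ i, x i ∈ A₁)
    (h₂sub : ∀ K ∈ M₂, ∀ x ∈ K, ∀ i, x i ∈ A₂)
    (h₁int : ∀ K₁ ∈ M₁, ∀ K₂ ∈ M₁, K₁ ≠ K₂ → (K₁ ∩ K₂).card < s)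
    (h₂int : ∀ K₁ ∈ M₂, ∀ K₂ ∈ M₂, K₁ ≠ K₂ → (K₁ ∩ K₂).card < s)
    -- the induced clique structure of a family `N` on a subset `X`
    (ind : Finset (Finset (Fin r → α)) → Finset α → Finset (Finset (Fin r → α)))
    (hind : ∀ N X, ind N X =
      (N.image fun K => K.filter fun x => ∀ i, x i ∈ X).filter fun K => s ≤ K.card)
    -- `B = A₁ ∩ A₂` is a common induced substructure
    (hcommon : ind M₁ (A₁ ∩ A₂) = ind M₂ (A₁ ∩ A₂))
    -- the predimension of a structure with universe `X` and maximal cliques `N`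
    (lam : Finset (Finset (Fin r → α)) → Finset α → ℤ)
    (hlam : ∀ N X, lam N X = (X.card : ℤ) - ∑ K ∈ N, max 0 ((K.card : ℤ) - ((s : ℤ) - 1)))
    -- the maximal cliques of the standard amalgam
    (MD : Finset (Finset (Fin r → α)))
    (hMD : MD = ((M₁ ∪ M₂).filter fun K =>
        (K.filter fun x => ∀ i, x i ∈ A₁ ∩ A₂).card < s) ∪
      (((M₁ ×ˢ M₂).filter fun p => s ≤ (p.1 ∩ p.2).card).image fun p => p.1 ∪ p.2)) :
    lam MD (A₁ ∪ A₂) - lam M₁ A₁ = lam M₂ A₂ - lam (ind M₂ (A₁ ∩ A₂)) (A₁ ∩ A₂) := by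
  set T := Fintype.piFinset fun _ : Fin r => A₁ ∩ A₂
  have hT : ∀ K₁ ∈ M₁, ∀ K₂ ∈ M₂, K₁ ∩ K₂ ⊆ T := fun K₁ h₁ K₂ h₂ x hx =>
    have hx := Finset.mem_inter.1 hx
    Fintype.mem_piFinset.2 fun i => Finset.mem_inter.2 ⟨h₁sub K₁ h₁ x hx.1 i, h₂sub K₂ h₂ x hx.2 i⟩
  have hindT : ∀ N, ind N (A₁ ∩ A₂) = induced s N T := by
    intro N
    simp only [hind, Finset.filter_forall_mem_eq_inter_piFinset]
    rfl
  have hMDT : MD = amalgam s T M₁ M₂ := by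
    simp only [hMD, Finset.filter_forall_mem_eq_inter_piFinset]
    rfl
  rw [hindT, hindT] at hcommon
  have hsum := sum_cliqueWeight_amalgam_add_sum_induced hT h₁int h₂int hcommon
  have hcard := Finset.card_union_add_card_inter A₁ A₂
  simp only [cliqueWeight] at hsum
  rw [hindT, hMDT, hlam, hlam, hlam, hlam]
  linarith

/-- The standard amalgam `D` of clique structures `A₁, A₂ ∈ C₀` over the common induced
substructure `B = A₁ ∩ A₂` satisfies `λ(D/A₁) = λ(A₂/B)`. -/
theorem stmt_9 {α : Type*} [DecidableEq α] (r s : ℕ) (hr : 1 ≤ r) (hs : 2 ≤ s)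
    (A₁ A₂ : Finset α) (M₁ M₂ : Finset (Finset (Fin r → α)))
    (h₁sub : ∀ K ∈ M₁, ∀ x ∈ K, ∀ i, x i ∈ A₁)
    (h₂sub : ∀ K ∈ M₂, ∀ x ∈ K, ∀ i, x i ∈ A₂)
    (h₁size : ∀ K ∈ M₁, s ≤ K.card) (h₂size : ∀ K ∈ M₂, s ≤ K.card)
    (h₁int : ∀ K₁ ∈ M₁, ∀ K₂ ∈ M₁, K₁ ≠ K₂ → (K₁ ∩ K₂).card < s)
    (h₂int : ∀ K₁ ∈ M₂, ∀ K₂ ∈ M₂, K₁ ≠ K₂ → (K₁ ∩ K₂).card < s)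
    -- the induced clique structure of a family `N` on a subset `X`
    (ind : Finset (Finset (Fin r → α)) → Finset α → Finset (Finset (Fin r → α)))
    (hind : ∀ N X, ind N X =
      (N.image fun K => K.filter fun x => ∀ i, x i ∈ X).filter fun K => s ≤ K.card)
    -- `B = A₁ ∩ A₂` is a common induced substructure
    (hcommon : ind M₁ (A₁ ∩ A₂) = ind M₂ (A₁ ∩ A₂))
    -- the predimension of a structure with universe `X` and maximal cliques `N`
    (lam : Finset (Finset (Fin r → α)) → Finset α → ℤ)
    (hlam : ∀ N X, lam N X = (X.card : ℤ) - ∑ K ∈ N, max 0 ((K.card : ℤ) - ((s : ℤ) - 1)))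
    -- the maximal cliques of the standard amalgam
    (MD : Finset (Finset (Fin r → α)))
    (hMD : MD = ((M₁ ∪ M₂).filter fun K =>
        (K.filter fun x => ∀ i, x i ∈ A₁ ∩ A₂).card < s) ∪
      (((M₁ ×ˢ M₂).filter fun p => s ≤ (p.1 ∩ p.2).card).image fun p => p.1 ∪ p.2)) :
    lam MD (A₁ ∪ A₂) - lam M₁ A₁ = lam M₂ A₂ - lam (ind M₂ (A₁ ∩ A₂)) (A₁ ∩ A₂) :=
  stmt_9_general r s A₁ A₂ M₁ M₂ h₁sub h₂sub h₁int h₂int ind hind hcommon lam hlam MD hMD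
end

section
/- Let A ∈ C_n (finite structures with n-ary relation R and δ(X) = |X| - |R^X| ≥ 0 for all X ⊆ A) and let F ⊆ A. Construct two extensions of F by an n-tuple ā of new elements: A' with R^{A'} = R^F and B' with R^{B'} = R^F ∪ {ā}. Then F ≤ A' and F ≤ B' (both extensions are strong), and A', B' ∈ C_n but A' and B' are not isomorphic over F (when n ≥ 1 and the tuple ā has distinct new elements). -/
/-! Every relation of `F` lives inside `F`, so intersecting with `F` can only lower the
predimension of a set `X`: the elements of `X` outside `F` carry no old relation. The one new
relation `ā` of `B'` is counted in `X` only when `X` contains the new element `aᵢ ∉ F`, which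
pays for it. Both strong embeddings and both memberships in `C_n` follow from these two
observations. An isomorphism over `F` from `A'` to `B'` would pull `ā` back to a relation of
`F`, hence to a tuple fixed by the isomorphism, forcing `ā` into `F`. -/

section Predimension

variable {α ι : Type*} [DecidableEq α] [Fintype ι]

def predim (R : Finset (ι → α)) (X : Finset α) : ℤ :=
  X.card - (R.filter fun t => ∀ i, t i ∈ X).card

variable {R S : Finset (ι → α)} {F X : Finset α}

theorem predim_anti (hRS : R ⊆ S) : predim S X ≤ predim R X := by
  have := Finset.card_le_card (Finset.filter_subset_filter (fun t => ∀ i, t i ∈ X) hRS)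
  unfold predim
  omega

theorem filter_forall_mem_inter (hR : ∀ t ∈ R, ∀ i, t i ∈ F) :
    R.filter (fun t => ∀ i, t i ∈ X ∩ F) = R.filter (fun t => ∀ i, t i ∈ X) :=
  Finset.filter_congr fun t ht => by
    simp only [Finset.mem_inter]
    exact ⟨fun h i => (h i).1, fun h i => ⟨h i, hR t ht i⟩⟩

theorem predim_inter_le (hR : ∀ t ∈ R, ∀ i, t i ∈ F) : predim R (X ∩ F) ≤ predim R X := by
  have := Finset.card_le_card (Finset.inter_subset_left : X ∩ F ⊆ X)
  unfold predim
  rw [filter_forall_mem_inter hR]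
  omega

theorem predim_inter_le_predim_insert (hR : ∀ t ∈ R, ∀ i, t i ∈ F) {a : ι → α} {i₀ : ι}
    (ha : a i₀ ∉ F) : predim R (X ∩ F) ≤ predim (insert a R) X := by
  by_cases haX : ∀ i, a i ∈ X
  · have haR : a ∉ R.filter fun t => ∀ i, t i ∈ X := fun h => ha (hR a (Finset.mem_filter.1 h).1 i₀)
    have hX : (insert (a i₀) (X ∩ F)).card ≤ X.card :=
      Finset.card_le_card (Finset.insert_subset (haX i₀) Finset.inter_subset_left)
    rw [Finset.card_insert_of_notMem fun h => ha (Finset.mem_inter.1 h).2] at hX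
    unfold predim
    rw [Finset.filter_insert, if_pos haX, Finset.card_insert_of_notMem haR,
      filter_forall_mem_inter hR]
    omega
  · have : predim (insert a R) X = predim R X := by
      rw [predim, predim, Finset.filter_insert, if_neg haX]
    exact this ▸ predim_inter_le hR

theorem not_forall_mem_iff_mem_insert_of_surjOn {U : Finset α} (hR : ∀ t ∈ R, ∀ i, t i ∈ F)
    {a : ι → α} {i₀ : ι} (ha : a i₀ ∉ F) (haU : ∀ i, a i ∈ U) {g : α → α} (hg : Set.SurjOn g U U)
    (hgF : ∀ x ∈ F, g x = x) :
    ¬ ∀ t : ι → α, (∀ i, t i ∈ U) → (t ∈ R ↔ (fun i => g (t i)) ∈ insert a R) := by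
  intro hiso
  choose t htU hgt using fun i => hg (haU i)
  have htR : t ∈ R := (hiso t htU).2 (by simp only [hgt]; exact Finset.mem_insert_self a R)
  have htF : t i₀ ∈ F := hR t htR i₀
  exact ha (hgt i₀ ▸ (hgF _ htF).symm ▸ htF)

end Predimension

theorem stmt_11_general {α : Type*} [DecidableEq α] (n : ℕ) (hn : 1 ≤ n)
    (F : Finset α) (RF : Finset (Fin n → α))
    (hRF : ∀ t ∈ RF, ∀ i, t i ∈ F)
    (hCn : ∀ X ⊆ F, 0 ≤ (X.card : ℤ) - ((RF.filter fun t => ∀ i, t i ∈ X).card : ℤ))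
    (a : Fin n → α) (hanew : ∀ i, a i ∉ F)
    (δ : Finset (Fin n → α) → Finset α → ℤ)
    (hδ : ∀ (R : Finset (Fin n → α)) (X : Finset α),
      δ R X = (X.card : ℤ) - ((R.filter fun t => ∀ i, t i ∈ X).card : ℤ))
    (U : Finset α) (hU : U = F ∪ Finset.image a Finset.univ)
    (RA RB : Finset (Fin n → α)) (hRA : RA = RF) (hRB : RB = insert a RF) :
    -- F ≤ A' and F ≤ B'
    (∀ X : Finset α, F ⊆ X → X ⊆ U → 0 ≤ δ RA X - δ RA F) ∧
    (∀ X : Finset α, F ⊆ X → X ⊆ U → 0 ≤ δ RB X - δ RB F) ∧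
    -- A', B' ∈ C_n
    (∀ X ⊆ U, 0 ≤ δ RA X) ∧ (∀ X ⊆ U, 0 ≤ δ RB X) ∧
    -- A' and B' are not isomorphic over F
    ¬ ∃ g : α → α, Set.BijOn g ↑U ↑U ∧ (∀ x ∈ F, g x = x) ∧
      (∀ t : Fin n → α, (∀ i, t i ∈ U) → (t ∈ RA ↔ (fun i => g (t i)) ∈ RB)) := by
  have hC : ∀ X, 0 ≤ δ RF (X ∩ F) := fun X => hδ RF _ ▸ hCn _ Finset.inter_subset_right
  obtain rfl : δ = predim := funext₂ fun R X => (hδ R X).trans (by rw [predim]; congr!)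
  subst RA RB
  have ha₀ : a ⟨0, hn⟩ ∉ F := hanew _
  refine ⟨fun X hFX _ => ?_, fun X hFX _ => ?_, fun X _ => ?_, fun X _ => ?_, ?_⟩
  · have := predim_inter_le (X := X) hRF
    rw [Finset.inter_eq_right.2 hFX] at this
    omega
  · have := predim_inter_le_predim_insert (X := X) hRF ha₀
    rw [Finset.inter_eq_right.2 hFX] at this
    have := predim_anti (X := F) (Finset.subset_insert a RF)
    omega
  · exact (hC X).trans (predim_inter_le hRF)
  · exact (hC X).trans (predim_inter_le_predim_insert hRF ha₀)
  · rintro ⟨g, hg, hgF, hiso⟩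
    refine not_forall_mem_iff_mem_insert_of_surjOn hRF ha₀ (fun i => ?_) hg.surjOn hgF hiso
    simp [hU]

/-- For `F ∈ C_n`, extending `F` by an `n`-tuple `ā` of distinct new elements with
either no new relation (`A'`) or the single new relation `ā` (`B'`) gives two strong
extensions `F ≤ A'`, `F ≤ B'` lying in `C_n`, which are not isomorphic over `F`. -/
theorem stmt_11 {α : Type*} [DecidableEq α] (n : ℕ) (hn : 1 ≤ n)
    (F : Finset α) (RF : Finset (Fin n → α))
    (hRF : ∀ t ∈ RF, ∀ i, t i ∈ F)
    (hCn : ∀ X ⊆ F, 0 ≤ (X.card : ℤ) - ((RF.filter fun t => ∀ i, t i ∈ X).card : ℤ))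
    (a : Fin n → α) (hainj : Function.Injective a) (hanew : ∀ i, a i ∉ F)
    (δ : Finset (Fin n → α) → Finset α → ℤ)
    (hδ : ∀ (R : Finset (Fin n → α)) (X : Finset α),
      δ R X = (X.card : ℤ) - ((R.filter fun t => ∀ i, t i ∈ X).card : ℤ))
    (U : Finset α) (hU : U = F ∪ Finset.image a Finset.univ)
    (RA RB : Finset (Fin n → α)) (hRA : RA = RF) (hRB : RB = insert a RF) :
    -- F ≤ A' and F ≤ B'
    (∀ X : Finset α, F ⊆ X → X ⊆ U → 0 ≤ δ RA X - δ RA F) ∧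
    (∀ X : Finset α, F ⊆ X → X ⊆ U → 0 ≤ δ RB X - δ RB F) ∧
    -- A', B' ∈ C_n
    (∀ X ⊆ U, 0 ≤ δ RA X) ∧ (∀ X ⊆ U, 0 ≤ δ RB X) ∧
    -- A' and B' are not isomorphic over F
    ¬ ∃ g : α → α, Set.BijOn g ↑U ↑U ∧ (∀ x ∈ F, g x = x) ∧
      (∀ t : Fin n → α, (∀ i, t i ∈ U) → (t ∈ RA ↔ (fun i => g (t i)) ∈ RB)) :=
  stmt_11_general n hn F RF hRF hCn a hanew δ hδ U hU RA RB hRA hRB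
end

section
/- In the construction of Lemma 'remove pathologies': let A ⊆ B be finite L_{rs}-structures. For each relation ā = (a₁,...,a_{rs}) ∈ R^B \ R^A introduce two new points x_ā, y_ā. In structure C the relations on the new points are R^C_ā = {(a₁,...,a_{rs-2},x_ā,y_ā), (a₃,...,a_{rs},y_ā,x_ā)}; in structure D they are R^D_ā = {(a₁,...,a_{rs-1},x_ā), (a₂,...,a_{rs},y_ā), (a₁,a₃,...,a_{rs-2},a_{rs},x_ā,y_ā)}. Writing S_ā = {a₁,...,a_{rs}, x_ā, y_ā}, prove: for any X ⊆ C (= universe of D) closed in C, δ_C(X) = |X \ A| - 3·|{ā : S_ā ⊆ X}| + δ_A(X ∩ A) = δ_D(X), hence X closed in C implies X closed in D and conversely, so the pregeometries of C and D coincide. -/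
/-!
Every tuple that the construction puts on the points of `S ā` (the tuple `ā` itself, `c₁ ā`,
`c₂ ā` in `C`, and `d₁ ā`, `d₂ ā`, `d₃ ā` in `D`) is injective with values in `S ā`, so it
lies in `X` iff at least `m - 1` points of `S ā` do, i.e. iff `S ā ⊆ X`. Hence each `ā` with
`S ā ⊆ X` contributes exactly three relations on `X` to `C` as well as to `D`, while `X ∩ A`
contributes those of `R^A`. The blocks do not overlap because they are told apart by the fresh
points in their last two coordinates.
-/

open Finset Function

theorem injOn_of_apply_eq {α β ι : Type*} {s : Set β} {f : β → ι → α} {g : β → α} (k : ι)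
    (hfg : ∀ b ∈ s, f b k = g b) (hg : Set.InjOn g s) : Set.InjOn f s :=
  fun b hb b' hb' h => hg hb hb' (by rw [← hfg b hb, ← hfg b' hb', h])

section Disjoint

variable {α β ι : Type*} [DecidableEq (ι → α)] {R : Finset (ι → α)} {T : Finset β}
  {f g : β → ι → α}

theorem disjoint_image_of_apply_notMem {B : Finset α} (k : ι) (hR : ∀ u ∈ R, u k ∈ B)
    (hf : ∀ t ∈ T, f t k ∉ B) : Disjoint R (T.image f) := by
  simp only [disjoint_right, mem_image, forall_exists_index, and_imp]
  rintro _ t ht rfl hu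
  exact hf t ht (hR _ hu)

theorem disjoint_image_image_of_apply_ne (k : ι) (h : ∀ t ∈ T, ∀ t' ∈ T, f t k ≠ g t' k) :
    Disjoint (T.image f) (T.image g) := by
  simp only [disjoint_left, mem_image, forall_exists_index, and_imp, not_exists, not_and]
  rintro _ t ht rfl t' ht' he
  exact h t ht t' ht' (congrFun he k).symm

end Disjoint

section Counting

variable {α : Type*} [DecidableEq α] {m : ℕ}

theorem card_filter_union_of_disjoint {s t : Finset α} (p : α → Prop) [DecidablePred p]
    (h : Disjoint s t) : #{u ∈ s ∪ t | p u} = #{u ∈ s | p u} + #{u ∈ t | p u} := by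
  rw [filter_union, card_union_of_disjoint (disjoint_filter_filter h)]

theorem card_filter_image_of_injOn {β : Type*} {s : Finset β} {f : β → α} {p : α → Prop}
    {q : β → Prop} [DecidablePred p] [DecidablePred q] (hf : Set.InjOn f s)
    (hpq : ∀ b ∈ s, p (f b) ↔ q b) : #{a ∈ s.image f | p a} = #{b ∈ s | q b} := by
  rw [filter_image, filter_congr hpq]
  exact card_image_of_injOn (hf.mono (coe_subset.2 (filter_subset _ _)))

theorem forall_mem_iff_subset_of_injective {S X : Finset α} {u : Fin m → α}
    (hu : Injective u) (huS : ∀ i, u i ∈ S) (hS : S ⊆ X ↔ m - 1 ≤ #(S ∩ X)) :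
    (∀ i, u i ∈ X) ↔ S ⊆ X := by
  refine ⟨fun huX => hS.2 ?_, fun hSX i => hSX (huS i)⟩
  calc m - 1 ≤ #(image u univ) := by rw [card_image_of_injective _ hu, card_fin]; omega
    _ ≤ #(S ∩ X) := card_le_card fun a ha => by
      obtain ⟨i, -, rfl⟩ := mem_image.1 ha
      exact mem_inter.2 ⟨huS i, huX i⟩

theorem card_filter_image_eq_of_injective {T : Finset (Fin m → α)}
    {S : (Fin m → α) → Finset α} {X : Finset α} {f : (Fin m → α) → Fin m → α}
    (hgood : ∀ t ∈ T, (S t ⊆ X ↔ m - 1 ≤ #(S t ∩ X))) (hf : Set.InjOn f T)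
    (hinj : ∀ t ∈ T, Injective (f t)) (hfS : ∀ t ∈ T, ∀ i, f t i ∈ S t) :
    #{u ∈ T.image f | ∀ i, u i ∈ X} = #{t ∈ T | S t ⊆ X} :=
  card_filter_image_of_injOn hf fun t ht =>
    forall_mem_iff_subset_of_injective (hinj t ht) (hfS t ht) (hgood t ht)

end Counting

section Tuples

variable {α : Type*} {m : ℕ} {t u : Fin m → α} {a b : α}

theorem injective_of_c1 (ht : Injective t) (hta : ∀ i, t i ≠ a) (htb : ∀ i, t i ≠ b)
    (hab : a ≠ b) (hu : ∀ i : Fin m, u i =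
      if (i : ℕ) < m - 2 then t i else if (i : ℕ) = m - 2 then a else b) :
    Injective u := by
  intro i j h
  rw [hu, hu] at h
  ext
  split_ifs at h <;>
    simp only [ht.eq_iff, Fin.ext_iff, hta, htb, hab, hab.symm, (hta _).symm, (htb _).symm] at h <;>
    omega

theorem injective_of_c2 (ht : Injective t) (hta : ∀ i, t i ≠ a) (htb : ∀ i, t i ≠ b)
    (hab : a ≠ b) (hu : ∀ i : Fin m, u i =
      if h : (i : ℕ) + 2 < m then t ⟨(i : ℕ) + 2, h⟩
      else if (i : ℕ) = m - 2 then a else b) :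
    Injective u := by
  intro i j h
  rw [hu, hu] at h
  ext
  split_ifs at h <;>
    simp only [ht.eq_iff, Fin.ext_iff, hta, htb, hab, hab.symm, (hta _).symm, (htb _).symm] at h <;>
    omega

theorem injective_of_d1 (ht : Injective t) (hta : ∀ i, t i ≠ a)
    (hu : ∀ i : Fin m, u i = if (i : ℕ) < m - 1 then t i else a) : Injective u := by
  intro i j h
  rw [hu, hu] at h
  ext
  split_ifs at h <;> simp only [ht.eq_iff, Fin.ext_iff, hta, (hta _).symm] at h <;> omega

theorem injective_of_d2 (ht : Injective t) (hta : ∀ i, t i ≠ a)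
    (hu : ∀ i : Fin m, u i = if h : (i : ℕ) + 1 < m then t ⟨(i : ℕ) + 1, h⟩ else a) :
    Injective u := by
  intro i j h
  rw [hu, hu] at h
  ext
  split_ifs at h <;> simp only [ht.eq_iff, Fin.ext_iff, hta, (hta _).symm] at h <;> omega

theorem injective_of_d3 (ht : Injective t) (hta : ∀ i, t i ≠ a) (htb : ∀ i, t i ≠ b)
    (hab : a ≠ b) (hu : ∀ i : Fin m, u i =
      if (i : ℕ) = 0 then t i
      else if h : (i : ℕ) < m - 3 then t ⟨(i : ℕ) + 1, by omega⟩
      else if (i : ℕ) = m - 3 then t ⟨m - 1, by omega⟩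
      else if (i : ℕ) = m - 2 then a else b) :
    Injective u := by
  intro i j h
  rw [hu, hu] at h
  ext
  split_ifs at h <;>
    simp only [ht.eq_iff, Fin.ext_iff, hta, htb, hab, hab.symm, (hta _).symm, (htb _).symm] at h <;>
    omega

end Tuples

structure FreshPoints {α : Type*} {m : ℕ} (B : Finset α) (T : Finset (Fin m → α))
    (x y : (Fin m → α) → α) : Prop where
  injective : ∀ t ∈ T, Injective t
  apply_mem : ∀ t ∈ T, ∀ i, t i ∈ B
  x_notMem : ∀ t ∈ T, x t ∉ B
  y_notMem : ∀ t ∈ T, y t ∉ B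
  x_ne_y : ∀ t ∈ T, ∀ t' ∈ T, x t ≠ y t'
  injOn_x : Set.InjOn x T
  injOn_y : Set.InjOn y T

namespace FreshPoints

variable {α : Type*} {m : ℕ} {B : Finset α} {T : Finset (Fin m → α)} {x y : (Fin m → α) → α}

theorem of_pairwise_ne (hinj : ∀ t ∈ T, Injective t) (hB : ∀ t ∈ T, ∀ i, t i ∈ B)
    (hfresh : ∀ t ∈ T, x t ∉ B ∧ y t ∉ B ∧ x t ≠ y t)
    (hpair : ∀ t ∈ T, ∀ t' ∈ T, t ≠ t' →
      x t ≠ x t' ∧ x t ≠ y t' ∧ y t ≠ x t' ∧ y t ≠ y t') :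
    FreshPoints B T x y where
  injective := hinj
  apply_mem := hB
  x_notMem t ht := (hfresh t ht).1
  y_notMem t ht := (hfresh t ht).2.1
  x_ne_y t ht t' ht' := by
    obtain rfl | hne := eq_or_ne t t'
    exacts [(hfresh t ht).2.2, (hpair t ht t' ht' hne).2.1]
  injOn_x t ht t' ht' h := by_contra fun hne => (hpair t ht t' ht' hne).1 h
  injOn_y t ht t' ht' h := by_contra fun hne => (hpair t ht t' ht' hne).2.2.2 h

theorem apply_ne_x (hF : FreshPoints B T x y) {t : Fin m → α} (ht : t ∈ T) (i : Fin m) :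
    t i ≠ x t :=
  fun h => hF.x_notMem t ht (h ▸ hF.apply_mem t ht i)

theorem apply_ne_y (hF : FreshPoints B T x y) {t : Fin m → α} (ht : t ∈ T) (i : Fin m) :
    t i ≠ y t :=
  fun h => hF.y_notMem t ht (h ▸ hF.apply_mem t ht i)

end FreshPoints

section Construction

variable {α : Type*} [DecidableEq α] {m : ℕ} {B X : Finset α} {R T : Finset (Fin m → α)}
  {x y : (Fin m → α) → α} {S : (Fin m → α) → Finset α}

theorem card_filter_eq_add_of_subset {R' : Finset (Fin m → α)} (hRR' : R ⊆ R')
    (hinj : ∀ t ∈ R' \ R, Injective t) (hS : ∀ t, S t = image t univ ∪ {x t, y t})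
    (hgood : ∀ t ∈ R' \ R, (S t ⊆ X ↔ m - 1 ≤ #(S t ∩ X))) :
    #{u ∈ R' | ∀ i, u i ∈ X} =
      #{u ∈ R | ∀ i, u i ∈ X} + #{t ∈ R' \ R | S t ⊆ X} := by
  have hsplit := card_filter_union_of_disjoint (fun u : Fin m → α => ∀ i, u i ∈ X)
    (disjoint_sdiff : Disjoint R (R' \ R))
  rw [union_sdiff_of_subset hRR'] at hsplit
  rw [hsplit, filter_congr fun t ht => forall_mem_iff_subset_of_injective (hinj t ht)
    (fun i => by simp [hS]) (hgood t ht)]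

theorem card_filter_union_image_c (hm : 2 ≤ m) (hR : ∀ u ∈ R, ∀ i, u i ∈ B)
    (hF : FreshPoints B T x y) {c1 c2 : (Fin m → α) → Fin m → α}
    (hc1 : ∀ t (i : Fin m), c1 t i =
      if (i : ℕ) < m - 2 then t i else if (i : ℕ) = m - 2 then x t else y t)
    (hc2 : ∀ t (i : Fin m), c2 t i =
      if h : (i : ℕ) + 2 < m then t ⟨(i : ℕ) + 2, h⟩
      else if (i : ℕ) = m - 2 then y t else x t)
    (hS : ∀ t, S t = image t univ ∪ {x t, y t})
    (hgood : ∀ t ∈ T, (S t ⊆ X ↔ m - 1 ≤ #(S t ∩ X))) :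
    #{u ∈ R ∪ T.image c1 ∪ T.image c2 | ∀ i, u i ∈ X} =
      #{u ∈ R | ∀ i, u i ∈ X} + 2 * #{t ∈ T | S t ⊆ X} := by
  have hc1y : ∀ t, c1 t ⟨m - 1, by omega⟩ = y t := fun t => by
    simp only [hc1]; split_ifs <;> first | rfl | omega
  have hc2x : ∀ t, c2 t ⟨m - 1, by omega⟩ = x t := fun t => by
    simp only [hc2]; split_ifs <;> first | rfl | omega
  have hdisj₁ : Disjoint R (T.image c1) := disjoint_image_of_apply_notMem _
    (fun u hu => hR u hu _) fun t ht => hc1y t ▸ hF.y_notMem t ht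
  have hdisj₂ : Disjoint (R ∪ T.image c1) (T.image c2) := disjoint_union_left.2
    ⟨disjoint_image_of_apply_notMem _ (fun u hu => hR u hu _)
        fun t ht => hc2x t ▸ hF.x_notMem t ht,
      disjoint_image_image_of_apply_ne _ fun t ht t' ht' => by
        rw [hc1y, hc2x]; exact (hF.x_ne_y t' ht' t ht).symm⟩
  rw [card_filter_union_of_disjoint _ hdisj₂, card_filter_union_of_disjoint _ hdisj₁,
    card_filter_image_eq_of_injective hgood (injOn_of_apply_eq _ (fun t _ => hc1y t) hF.injOn_y)
      (fun t ht => injective_of_c1 (hF.injective t ht) (hF.apply_ne_x ht) (hF.apply_ne_y ht)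
        (hF.x_ne_y t ht t ht) (hc1 t))
      (fun t _ i => by rw [hc1, hS]; split_ifs <;> simp),
    card_filter_image_eq_of_injective hgood (injOn_of_apply_eq _ (fun t _ => hc2x t) hF.injOn_x)
      (fun t ht => injective_of_c2 (hF.injective t ht) (hF.apply_ne_y ht) (hF.apply_ne_x ht)
        (hF.x_ne_y t ht t ht).symm (hc2 t))
      (fun t _ i => by rw [hc2, hS]; split_ifs <;> simp)]
  ring

theorem card_filter_union_image_d (hm : 3 ≤ m) (hR : ∀ u ∈ R, ∀ i, u i ∈ B)
    (hF : FreshPoints B T x y) {d1 d2 d3 : (Fin m → α) → Fin m → α}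
    (hd1 : ∀ t (i : Fin m), d1 t i = if (i : ℕ) < m - 1 then t i else x t)
    (hd2 : ∀ t (i : Fin m), d2 t i =
      if h : (i : ℕ) + 1 < m then t ⟨(i : ℕ) + 1, h⟩ else y t)
    (hd3 : ∀ t (i : Fin m), d3 t i =
      if (i : ℕ) = 0 then t i
      else if h : (i : ℕ) < m - 3 then t ⟨(i : ℕ) + 1, by omega⟩
      else if (i : ℕ) = m - 3 then t ⟨m - 1, by omega⟩
      else if (i : ℕ) = m - 2 then x t else y t)
    (hS : ∀ t, S t = image t univ ∪ {x t, y t})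
    (hgood : ∀ t ∈ T, (S t ⊆ X ↔ m - 1 ≤ #(S t ∩ X))) :
    #{u ∈ R ∪ T.image d1 ∪ T.image d2 ∪ T.image d3 | ∀ i, u i ∈ X} =
      #{u ∈ R | ∀ i, u i ∈ X} + 3 * #{t ∈ T | S t ⊆ X} := by
  have hd1x : ∀ t, d1 t ⟨m - 1, by omega⟩ = x t := fun t => by
    simp only [hd1]; split_ifs <;> first | rfl | omega
  have hd2y : ∀ t, d2 t ⟨m - 1, by omega⟩ = y t := fun t => by
    simp only [hd2]; split_ifs <;> first | rfl | omega
  have hd3y : ∀ t, d3 t ⟨m - 1, by omega⟩ = y t := fun t => by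
    simp only [hd3]; split_ifs <;> first | rfl | omega
  have hd2B : ∀ t ∈ T, d2 t ⟨m - 2, by omega⟩ ∈ B := fun t ht => by
    simp only [hd2]; split_ifs <;> first | exact hF.apply_mem t ht _ | omega
  have hd3x : ∀ t, d3 t ⟨m - 2, by omega⟩ = x t := fun t => by
    simp only [hd3]; split_ifs <;> first | rfl | omega
  have hdisj₁ : Disjoint R (T.image d1) := disjoint_image_of_apply_notMem _
    (fun u hu => hR u hu _) fun t ht => hd1x t ▸ hF.x_notMem t ht
  have hdisj₂ : Disjoint (R ∪ T.image d1) (T.image d2) := disjoint_union_left.2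
    ⟨disjoint_image_of_apply_notMem _ (fun u hu => hR u hu _)
        fun t ht => hd2y t ▸ hF.y_notMem t ht,
      disjoint_image_image_of_apply_ne _ fun t ht t' ht' => by
        rw [hd1x, hd2y]; exact hF.x_ne_y t ht t' ht'⟩
  have hdisj₃ : Disjoint (R ∪ T.image d1 ∪ T.image d2) (T.image d3) := disjoint_union_left.2
    ⟨disjoint_union_left.2
      ⟨disjoint_image_of_apply_notMem _ (fun u hu => hR u hu _)
          fun t ht => hd3y t ▸ hF.y_notMem t ht,
        disjoint_image_image_of_apply_ne _ fun t ht t' ht' => by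
          rw [hd1x, hd3y]; exact hF.x_ne_y t ht t' ht'⟩,
      disjoint_image_image_of_apply_ne _ fun t ht t' ht' h =>
        hF.x_notMem t' ht' (hd3x t' ▸ h ▸ hd2B t ht)⟩
  rw [card_filter_union_of_disjoint _ hdisj₃, card_filter_union_of_disjoint _ hdisj₂,
    card_filter_union_of_disjoint _ hdisj₁,
    card_filter_image_eq_of_injective hgood (injOn_of_apply_eq _ (fun t _ => hd1x t) hF.injOn_x)
      (fun t ht => injective_of_d1 (hF.injective t ht) (hF.apply_ne_x ht) (hd1 t))
      (fun t _ i => by rw [hd1, hS]; split_ifs <;> simp),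
    card_filter_image_eq_of_injective hgood (injOn_of_apply_eq _ (fun t _ => hd2y t) hF.injOn_y)
      (fun t ht => injective_of_d2 (hF.injective t ht) (hF.apply_ne_y ht) (hd2 t))
      (fun t _ i => by rw [hd2, hS]; split_ifs <;> simp),
    card_filter_image_eq_of_injective hgood (injOn_of_apply_eq _ (fun t _ => hd3y t) hF.injOn_y)
      (fun t ht => injective_of_d3 (hF.injective t ht) (hF.apply_ne_x ht) (hF.apply_ne_y ht)
        (hF.x_ne_y t ht t ht) (hd3 t))
      (fun t _ i => by rw [hd3, hS]; split_ifs <;> simp)]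
  ring

end Construction

/-- The computation in Lemma "remove pathologies": for `A ⊆ B` finite `L_{rs}`-structures
(arity `m = rs`), new points `x_ā, y_ā` for each `ā ∈ R^B \ R^A`, the structures `C` and
`D` with the indicated relation blocks, and any `X` such that for every `ā`,
`S_ā ⊆ X ↔ |S_ā ∩ X| ≥ m - 1`, one has
`δ_C(X) = |X \ A| - 3·|{ā : S_ā ⊆ X}| + δ_A(X ∩ A) = δ_D(X)`. -/
theorem stmt_14 {α : Type*} [DecidableEq α] (m : ℕ) (hm : 4 ≤ m)
    (A B : Finset α) (RA RB : Finset (Fin m → α)) (hRAB : RA ⊆ RB)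
    (hRAmem : ∀ t ∈ RA, ∀ i, t i ∈ A)
    (hRBmem : ∀ t ∈ RB, ∀ i, t i ∈ B)
    (hinj : ∀ t ∈ RB \ RA, Function.Injective t)
    (x y : (Fin m → α) → α)
    (hfresh : ∀ t ∈ RB \ RA, x t ∉ B ∧ y t ∉ B ∧ x t ≠ y t)
    (hpair : ∀ t ∈ RB \ RA, ∀ t' ∈ RB \ RA, t ≠ t' →
      x t ≠ x t' ∧ x t ≠ y t' ∧ y t ≠ x t' ∧ y t ≠ y t')
    (c1 c2 d1 d2 d3 : (Fin m → α) → (Fin m → α))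
    -- `c1 ā = (a₁, …, a_{m-2}, x_ā, y_ā)`
    (hc1 : ∀ t (i : Fin m), c1 t i =
      if (i : ℕ) < m - 2 then t i else if (i : ℕ) = m - 2 then x t else y t)
    -- `c2 ā = (a₃, …, a_m, y_ā, x_ā)`
    (hc2 : ∀ t (i : Fin m), c2 t i =
      if h : (i : ℕ) + 2 < m then t ⟨(i : ℕ) + 2, h⟩
      else if (i : ℕ) = m - 2 then y t else x t)
    -- `d1 ā = (a₁, …, a_{m-1}, x_ā)`
    (hd1 : ∀ t (i : Fin m), d1 t i = if (i : ℕ) < m - 1 then t i else x t)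
    -- `d2 ā = (a₂, …, a_m, y_ā)`
    (hd2 : ∀ t (i : Fin m), d2 t i =
      if h : (i : ℕ) + 1 < m then t ⟨(i : ℕ) + 1, h⟩ else y t)
    -- `d3 ā = (a₁, a₃, …, a_{m-2}, a_m, x_ā, y_ā)`
    (hd3 : ∀ t (i : Fin m), d3 t i =
      if (i : ℕ) = 0 then t i
      else if h : (i : ℕ) < m - 3 then t ⟨(i : ℕ) + 1, by omega⟩
      else if (i : ℕ) = m - 3 then t ⟨m - 1, by omega⟩
      else if (i : ℕ) = m - 2 then x t else y t)
    (RC RD : Finset (Fin m → α))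
    (hRC : RC = RB ∪ (RB \ RA).image c1 ∪ (RB \ RA).image c2)
    (hRD : RD = RA ∪ (RB \ RA).image d1 ∪ (RB \ RA).image d2 ∪ (RB \ RA).image d3)
    -- `S ā = {a₁, …, a_m, x_ā, y_ā}`
    (S : (Fin m → α) → Finset α)
    (hS : ∀ t, S t = Finset.image t Finset.univ ∪ {x t, y t})
    (X : Finset α)
    (hgood : ∀ t ∈ RB \ RA, (S t ⊆ X ↔ m - 1 ≤ (S t ∩ X).card)) :
    (X.card : ℤ) - ((RC.filter fun u => ∀ i, u i ∈ X).card : ℤ)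
        = ((X \ A).card : ℤ) - 3 * (((RB \ RA).filter fun t => S t ⊆ X).card : ℤ)
          + (((X ∩ A).card : ℤ) -
              ((RA.filter fun u => ∀ i, u i ∈ X ∩ A).card : ℤ)) ∧
    ((X \ A).card : ℤ) - 3 * (((RB \ RA).filter fun t => S t ⊆ X).card : ℤ)
          + (((X ∩ A).card : ℤ) -
              ((RA.filter fun u => ∀ i, u i ∈ X ∩ A).card : ℤ))
        = (X.card : ℤ) - ((RD.filter fun u => ∀ i, u i ∈ X).card : ℤ) := by
  have hF : FreshPoints B (RB \ RA) x y := .of_pairwise_ne hinj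
    (fun t ht => hRBmem t (mem_sdiff.1 ht).1) hfresh hpair
  have hRA : #{u ∈ RA | ∀ i, u i ∈ X} = #{u ∈ RA | ∀ i, u i ∈ X ∩ A} := by
    congr 1
    exact filter_congr fun u hu => by simp only [mem_inter, hRAmem u hu, and_true]
  have hRB := card_filter_eq_add_of_subset hRAB hinj hS hgood
  have hC := card_filter_union_image_c (by omega) hRBmem hF hc1 hc2 hS hgood
  have hD := card_filter_union_image_d (by omega) (fun u hu => hRBmem u (hRAB hu)) hF
    hd1 hd2 hd3 hS hgood
  have hX := card_sdiff_add_card_inter X A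
  subst hRC hRD
  constructor <;> omega
end

section
/- Suppose X ⊆ D with clique reduct X_c such that for every maximal clique K of the ambient structure B_c, a designated (s-1)-element subset E_K ⊆ K satisfies: E_K ⊆ X^r if and only if |K ∩ X^r| ≥ s (X is 'good'). Define R-relations R₀ ∪ R₁ pairing f(K) = tuple enumerating E_K with each element of K \ E_K (or K \ A^r). Then the relative clique predimension equals the relative relational predimension: λ(X_c / X_c ∩ A_c) = δ(X / X ∩ A). -/
/-!
Sort the new relations `R₀ ∪ R₁` by the maximal clique `K` they come from. These pieces are
disjoint: `f(K)` determines `E_K`, and two cliques sharing `E_K` and one further point would meet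
in `s` points. The relations of `A` are counted equally in `X` and in `X ∩ A`, so both sides of
the identity become sums over `K`. A relation `f(K)b̄` lies in `X` only if `E_K ⊆ X^r`, which for
good `X` happens exactly when `K ∩ X^r` has more than `s - 1` points; counting the admissible
`b̄` then gives the excess `|K ∩ X^r| - (s - 1)` clique by clique.
-/

open Finset

namespace CliquePredimension

variable {α : Type*} [DecidableEq α] {r n : ℕ}

/-- `K ∩ S^r`. -/
def tuplesIn (S : Finset α) (K : Finset (Fin r → α)) : Finset (Fin r → α) :=
  K.filter fun p => ∀ i, p i ∈ S

/-- `R^S`. -/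
def relsIn (S : Finset α) (R : Finset ((Fin n → Fin r → α) × (Fin r → α))) :
    Finset ((Fin n → Fin r → α) × (Fin r → α)) :=
  R.filter fun q => (∀ j i, q.1 j i ∈ S) ∧ ∀ i, q.2 i ∈ S

theorem tuplesIn_mono {S S' : Finset α} (h : S ⊆ S') (K : Finset (Fin r → α)) :
    tuplesIn S K ⊆ tuplesIn S' K :=
  monotone_filter_right K fun _ _ hp i => h (hp i)

theorem tuplesIn_inter (X A : Finset α) (K : Finset (Fin r → α)) :
    tuplesIn (X ∩ A) K = tuplesIn X K ∩ tuplesIn A K := by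
  ext p
  simp only [tuplesIn, mem_filter, mem_inter, forall_and]
  tauto

theorem tuplesIn_sdiff (S : Finset α) (K E : Finset (Fin r → α)) :
    tuplesIn S (K \ E) = tuplesIn S K \ E := by
  ext p
  simp only [tuplesIn, mem_filter, mem_sdiff]
  tauto

theorem relsIn_inter_of_forall_mem {X A : Finset α}
    {R : Finset ((Fin n → Fin r → α) × (Fin r → α))}
    (hR : ∀ q ∈ R, (∀ j i, q.1 j i ∈ A) ∧ ∀ i, q.2 i ∈ A) :
    relsIn (X ∩ A) R = relsIn X R := by
  refine filter_congr fun q hq => ?_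
  simp only [mem_inter, forall_and]
  have := hR q hq
  tauto

theorem card_relsIn_union_add_card_relsIn_inter (S : Finset α)
    (R G : Finset ((Fin n → Fin r → α) × (Fin r → α))) :
    #(relsIn S (R ∪ G)) + #(relsIn S (R ∩ G)) = #(relsIn S R) + #(relsIn S G) := by
  rw [relsIn, relsIn, filter_union, filter_inter_distrib]
  exact card_union_add_card_inter _ _

theorem card_relsIn_union_sub {X A : Finset α} {R : Finset ((Fin n → Fin r → α) × (Fin r → α))}
    (hR : ∀ q ∈ R, (∀ j i, q.1 j i ∈ A) ∧ ∀ i, q.2 i ∈ A)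
    (G : Finset ((Fin n → Fin r → α) × (Fin r → α))) :
    (#(relsIn X (R ∪ G)) : ℤ) - #(relsIn (X ∩ A) (R ∪ G)) =
      #(relsIn X G) - #(relsIn (X ∩ A) G) := by
  have hX := card_relsIn_union_add_card_relsIn_inter X R G
  have hXA := card_relsIn_union_add_card_relsIn_inter (X ∩ A) R G
  rw [relsIn_inter_of_forall_mem hR,
    relsIn_inter_of_forall_mem fun q hq => hR q (mem_inter.1 hq).1] at hXA
  omega

theorem card_relsIn_biUnion {ι : Type*} {M : Finset ι}
    {g : ι → Finset ((Fin n → Fin r → α) × (Fin r → α))}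
    (h : (M : Set ι).PairwiseDisjoint g) (S : Finset α) :
    #(relsIn S (M.biUnion g)) = ∑ K ∈ M, #(relsIn S (g K)) := by
  rw [relsIn, filter_biUnion, card_biUnion (pairwiseDisjoint_filter h _)]
  rfl

theorem card_relsIn_image_prodMk {S : Finset α} {e : Fin n → Fin r → α}
    {E : Finset (Fin r → α)} (he : univ.image e = E) (T : Finset (Fin r → α)) :
    #(relsIn S (T.image (e, ·))) =
      if ∀ p ∈ E, ∀ i, p i ∈ S then #(tuplesIn S T) else 0 := by
  have hhead : (∀ j i, e j i ∈ S) ↔ ∀ p ∈ E, ∀ i, p i ∈ S := by simp [← he]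
  rw [relsIn, filter_image, card_image_of_injective _ (Prod.mk_right_injective e)]
  split_ifs with hE
  · exact congrArg card (filter_congr fun p _ => and_iff_right (hhead.2 hE))
  · exact card_eq_zero.2 (filter_eq_empty_iff.2 fun p _ h => hE (hhead.1 h.1))

theorem disjoint_image_prodMk {β γ : Type*} [DecidableEq β] [DecidableEq γ] {e₁ e₂ : γ}
    {T₁ T₂ : Finset β} (h : e₁ = e₂ → Disjoint T₁ T₂) :
    Disjoint (T₁.image (e₁, ·)) (T₂.image (e₂, ·)) := by
  by_cases he : e₁ = e₂
  · subst he
    exact (disjoint_image (Prod.mk_right_injective e₁)).2 (h rfl)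
  · simp only [disjoint_left, mem_image]
    rintro _ ⟨b₁, -, rfl⟩ ⟨b₂, -, hb⟩
    exact he (congrArg Prod.fst hb).symm

theorem disjoint_sdiff_of_card_inter_le {β : Type*} [DecidableEq β] {K₁ K₂ E : Finset β}
    (h₁ : E ⊆ K₁) (h₂ : E ⊆ K₂) (h : #(K₁ ∩ K₂) ≤ #E) :
    Disjoint (K₁ \ E) (K₂ \ E) := by
  have hE : E = K₁ ∩ K₂ := eq_of_subset_of_card_le (subset_inter h₁ h₂) h
  rw [disjoint_left]
  rintro b hb₁ hb₂
  rw [mem_sdiff] at hb₁ hb₂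
  exact hb₁.2 (hE ▸ mem_inter.2 ⟨hb₁.1, hb₂.1⟩)

/-- The `R₀ ∪ R₁`-relations contributed by the maximal clique `K`: `f(K)b̄` for `b̄ ∈ K \ A^r`
if `K ∩ A^r` is a maximal clique of `A_c`, and for `b̄ ∈ K \ E_K` otherwise. -/
def cliqueRels (A : Finset α) (s : ℕ) (E : Finset (Fin r → α) → Finset (Fin r → α))
    (f : Finset (Fin r → α) → Fin n → Fin r → α) (K : Finset (Fin r → α)) :
    Finset ((Fin n → Fin r → α) × (Fin r → α)) :=
  (if s ≤ #(tuplesIn A K) then K \ tuplesIn A K else K \ E K).image (f K, ·)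

section cliqueRels

variable {A X : Finset α} {s : ℕ} {E : Finset (Fin r → α) → Finset (Fin r → α)}
  {f : Finset (Fin r → α) → Fin n → Fin r → α}

theorem pairwiseDisjoint_cliqueRels {MB : Finset (Finset (Fin r → α))}
    (hint : ∀ K₁ ∈ MB, ∀ K₂ ∈ MB, K₁ ≠ K₂ → #(K₁ ∩ K₂) < s)
    (hEK : ∀ K ∈ MB, E K ⊆ K) (hEcard : ∀ K ∈ MB, #(E K) = s - 1)
    (hEA : ∀ K ∈ MB, s ≤ #(tuplesIn A K) → ∀ p ∈ E K, ∀ i, p i ∈ A)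
    (hf : ∀ K ∈ MB, univ.image (f K) = E K) :
    (MB : Set (Finset (Fin r → α))).PairwiseDisjoint (cliqueRels A s E f) := by
  have htail : ∀ K ∈ MB,
      (if s ≤ #(tuplesIn A K) then K \ tuplesIn A K else K \ E K) ⊆ K \ E K := by
    intro K hK
    split_ifs with hA
    · exact sdiff_subset_sdiff subset_rfl fun p hp =>
        mem_filter.2 ⟨hEK K hK hp, hEA K hK hA p hp⟩
    · exact subset_rfl
  intro K₁ h₁ K₂ h₂ hne
  refine disjoint_image_prodMk fun hfK => Disjoint.mono (htail K₁ h₁) (htail K₂ h₂) ?_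
  have hE : E K₁ = E K₂ := by rw [← hf K₁ h₁, ← hf K₂ h₂, hfK]
  rw [hE]
  refine disjoint_sdiff_of_card_inter_le (hE ▸ hEK K₁ h₁) (hEK K₂ h₂) ?_
  have := hint K₁ h₁ K₂ h₂ hne
  rw [hEcard K₂ h₂]
  omega

theorem cast_ite_card_tuplesIn_sdiff_eq_max {S : Finset α} {K E : Finset (Fin r → α)}
    (hs : 1 ≤ s) (hEK : E ⊆ K) (hEcard : #E = s - 1)
    (h : s ≤ #(tuplesIn S K) → ∀ p ∈ E, ∀ i, p i ∈ S) :
    ((if ∀ p ∈ E, ∀ i, p i ∈ S then #(tuplesIn S (K \ E)) else 0 : ℕ) : ℤ) =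
      max 0 ((#(tuplesIn S K) : ℤ) - (s - 1)) := by
  split_ifs with hES
  · have hsub : E ⊆ tuplesIn S K := fun p hp => mem_filter.2 ⟨hEK hp, hES p hp⟩
    have := card_le_card hsub
    rw [tuplesIn_sdiff, card_sdiff_of_subset hsub, max_eq_right (by omega)]
    omega
  · have : #(tuplesIn S K) < s := by
      by_contra hK
      exact hES (h (by omega))
    rw [max_eq_left (by omega)]
    rfl

theorem card_relsIn_cliqueRels_sub {K : Finset (Fin r → α)} (hs : 1 ≤ s) (hEK : E K ⊆ K)
    (hEcard : #(E K) = s - 1) (hEA : s ≤ #(tuplesIn A K) → ∀ p ∈ E K, ∀ i, p i ∈ A)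
    (hf : univ.image (f K) = E K)
    (hgood : (∀ p ∈ E K, ∀ i, p i ∈ X) ↔ s ≤ #(tuplesIn X K)) :
    (#(relsIn X (cliqueRels A s E f K)) : ℤ) - #(relsIn (X ∩ A) (cliqueRels A s E f K)) =
      max 0 ((#(tuplesIn X K) : ℤ) - (s - 1)) -
        max 0 ((#(tuplesIn (X ∩ A) K) : ℤ) - (s - 1)) := by
  have hXA_le_X := card_le_card (tuplesIn_mono (inter_subset_left : X ∩ A ⊆ X) K)
  have hXA_le_A := card_le_card (tuplesIn_mono (inter_subset_right : X ∩ A ⊆ A) K)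
  unfold cliqueRels
  by_cases hA : s ≤ #(tuplesIn A K)
  · -- `E_K ⊆ A^r` and `b̄ ∉ A^r`, so no relation `f(K)b̄` lies inside `X ∩ A`
    rw [if_pos hA, card_relsIn_image_prodMk hf, card_relsIn_image_prodMk hf, tuplesIn_sdiff,
      tuplesIn_sdiff, sdiff_eq_empty_iff_subset.2 (tuplesIn_mono inter_subset_right K),
      card_empty, ite_self, card_sdiff, ← tuplesIn_inter, inter_comm A]
    split_ifs with hEX
    · have hEXA : E K ⊆ tuplesIn (X ∩ A) K := fun p hp =>
        mem_filter.2 ⟨hEK hp, fun i => mem_inter.2 ⟨hEX p hp i, hEA hA p hp i⟩⟩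
      have := card_le_card hEXA
      have := hgood.1 hEX
      rw [max_eq_right (by omega), max_eq_right (by omega)]
      omega
    · have := hgood.not.1 hEX
      rw [max_eq_left (by omega), max_eq_left (by omega)]
      rfl
  · rw [if_neg hA, card_relsIn_image_prodMk hf, card_relsIn_image_prodMk hf,
      cast_ite_card_tuplesIn_sdiff_eq_max hs hEK hEcard hgood.2,
      cast_ite_card_tuplesIn_sdiff_eq_max hs hEK hEcard fun h => absurd (h.trans hXA_le_A) hA]

end cliqueRels

end CliquePredimension

open CliquePredimension

theorem stmt_16_general {α : Type*} [DecidableEq α] (r s : ℕ) (hs : 2 ≤ s) (A : Finset α)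
    (MB : Finset (Finset (Fin r → α)))
    (hint : ∀ K₁ ∈ MB, ∀ K₂ ∈ MB, K₁ ≠ K₂ → (K₁ ∩ K₂).card < s)
    (E : Finset (Fin r → α) → Finset (Fin r → α))
    (hE : ∀ K ∈ MB, E K ⊆ K ∧ (E K).card = s - 1 ∧
      (s ≤ (K.filter fun p => ∀ i, p i ∈ A).card → ∀ p ∈ E K, ∀ i, p i ∈ A))
    (f : Finset (Fin r → α) → (Fin (s - 1) → (Fin r → α)))
    (hf : ∀ K ∈ MB, Finset.image (f K) Finset.univ = E K)
    (RA : Finset ((Fin (s - 1) → (Fin r → α)) × (Fin r → α)))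
    (hRAmem : ∀ q ∈ RA, (∀ j i, q.1 j i ∈ A) ∧ (∀ i, q.2 i ∈ A))
    (R0 R1 : Finset ((Fin (s - 1) → (Fin r → α)) × (Fin r → α)))
    (hR0 : R0 = MB.biUnion fun K =>
      if s ≤ (K.filter fun p => ∀ i, p i ∈ A).card then
        (K.filter fun p => ¬ ∀ i, p i ∈ A).image fun b => (f K, b)
      else ∅)
    (hR1 : R1 = MB.biUnion fun K =>
      if s ≤ (K.filter fun p => ∀ i, p i ∈ A).card then ∅
      else (K \ E K).image fun b => (f K, b))
    (X : Finset α)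
    (hgood : ∀ K ∈ MB,
      ((∀ p ∈ E K, ∀ i, p i ∈ X) ↔ s ≤ (K.filter fun p => ∀ i, p i ∈ X).card)) :
    -- λ(X / X ∩ A) = δ(X / X ∩ A)
    (((X.card : ℤ) -
        ∑ K ∈ MB, max 0 (((K.filter fun p => ∀ i, p i ∈ X).card : ℤ) - ((s : ℤ) - 1))) -
      (((X ∩ A).card : ℤ) -
        ∑ K ∈ MB, max 0 (((K.filter fun p => ∀ i, p i ∈ X ∩ A).card : ℤ) - ((s : ℤ) - 1))))
    =
    (((X.card : ℤ) -
        (((RA ∪ R0 ∪ R1).filter fun q =>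
          (∀ j i, q.1 j i ∈ X) ∧ (∀ i, q.2 i ∈ X)).card : ℤ)) -
      (((X ∩ A).card : ℤ) -
        (((RA ∪ R0 ∪ R1).filter fun q =>
          (∀ j i, q.1 j i ∈ X ∩ A) ∧ (∀ i, q.2 i ∈ X ∩ A)).card : ℤ))) := by
  have hs1 : 1 ≤ s := by omega
  have hR : R0 ∪ R1 = MB.biUnion (cliqueRels A s E f) := by
    rw [hR0, hR1, ← biUnion_union]
    refine biUnion_congr rfl fun K _ => ?_
    unfold cliqueRels tuplesIn
    split_ifs <;> simp only [filter_not, union_empty, empty_union]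
  have hdisj := pairwiseDisjoint_cliqueRels hint (fun K hK => (hE K hK).1)
    (fun K hK => (hE K hK).2.1) (fun K hK => (hE K hK).2.2) hf
  have key := card_relsIn_union_sub (X := X) hRAmem (R0 ∪ R1)
  rw [← union_assoc, hR, card_relsIn_biUnion hdisj, card_relsIn_biUnion hdisj] at key
  push_cast at key
  rw [← sum_sub_distrib, sum_congr rfl fun K hK =>
    card_relsIn_cliqueRels_sub hs1 (hE K hK).1 (hE K hK).2.1 (hE K hK).2.2 (hf K hK)
      (hgood K hK),
    sum_sub_distrib] at key
  unfold relsIn tuplesIn at key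
  linarith

/-- In the construction of the final lemma: `B_c ∈ C_clq` extends `A_c`; for each maximal
clique `K` an `(s-1)`-element subset `E_K ⊆ K` is chosen (inside `A^r` whenever
`K ∩ A^r` is a clique of `A_c`), enumerated by the tuple `f(K)`; the relations are
`R^A ∪ R₀ ∪ R₁`. For any `X ⊆ B` that is good (for every maximal clique `K`,
`E_K ⊆ X^r ↔ |K ∩ X^r| ≥ s`), the relative clique predimension equals the relative
relational predimension: `λ(X_c / X_c ∩ A_c) = δ(X / X ∩ A)`. -/
theorem stmt_16 {α : Type*} [DecidableEq α] (r s : ℕ) (hr : 1 ≤ r) (hs : 2 ≤ s)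
    (A B : Finset α) (hAB : A ⊆ B)
    (MB : Finset (Finset (Fin r → α)))
    (hsub : ∀ K ∈ MB, ∀ p ∈ K, ∀ i, p i ∈ B)
    (hsize : ∀ K ∈ MB, s ≤ K.card)
    (hint : ∀ K₁ ∈ MB, ∀ K₂ ∈ MB, K₁ ≠ K₂ → (K₁ ∩ K₂).card < s)
    (E : Finset (Fin r → α) → Finset (Fin r → α))
    (hE : ∀ K ∈ MB, E K ⊆ K ∧ (E K).card = s - 1 ∧
      (s ≤ (K.filter fun p => ∀ i, p i ∈ A).card → ∀ p ∈ E K, ∀ i, p i ∈ A))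
    (f : Finset (Fin r → α) → (Fin (s - 1) → (Fin r → α)))
    (hf : ∀ K ∈ MB, Finset.image (f K) Finset.univ = E K)
    (RA : Finset ((Fin (s - 1) → (Fin r → α)) × (Fin r → α)))
    (hRAmem : ∀ q ∈ RA, (∀ j i, q.1 j i ∈ A) ∧ (∀ i, q.2 i ∈ A))
    (R0 R1 : Finset ((Fin (s - 1) → (Fin r → α)) × (Fin r → α)))
    (hR0 : R0 = MB.biUnion fun K =>
      if s ≤ (K.filter fun p => ∀ i, p i ∈ A).card then
        (K.filter fun p => ¬ ∀ i, p i ∈ A).image fun b => (f K, b)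
      else ∅)
    (hR1 : R1 = MB.biUnion fun K =>
      if s ≤ (K.filter fun p => ∀ i, p i ∈ A).card then ∅
      else (K \ E K).image fun b => (f K, b))
    (X : Finset α) (hXB : X ⊆ B)
    (hgood : ∀ K ∈ MB,
      ((∀ p ∈ E K, ∀ i, p i ∈ X) ↔ s ≤ (K.filter fun p => ∀ i, p i ∈ X).card)) :
    -- λ(X / X ∩ A) = δ(X / X ∩ A)
    (((X.card : ℤ) -
        ∑ K ∈ MB, max 0 (((K.filter fun p => ∀ i, p i ∈ X).card : ℤ) - ((s : ℤ) - 1))) -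
      (((X ∩ A).card : ℤ) -
        ∑ K ∈ MB, max 0 (((K.filter fun p => ∀ i, p i ∈ X ∩ A).card : ℤ) - ((s : ℤ) - 1))))
    =
    (((X.card : ℤ) -
        (((RA ∪ R0 ∪ R1).filter fun q =>
          (∀ j i, q.1 j i ∈ X) ∧ (∀ i, q.2 i ∈ X)).card : ℤ)) -
      (((X ∩ A).card : ℤ) -
        (((RA ∪ R0 ∪ R1).filter fun q =>
          (∀ j i, q.1 j i ∈ X ∩ A) ∧ (∀ i, q.2 i ∈ X ∩ A)).card : ℤ))) :=
  stmt_16_general r s hs A MB hint E hE f hf RA hRAmem R0 R1 hR0 hR1 X hgood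
end
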